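/- Let n ≥ 1, p ≥ 2, 0 < s < 1, and let V : ℝ^n → ℝ be continuous with V ≥ 0. Let (u_k) be a sequence in X^s and u ∈ X^s such that ⟨A(u_k) − A(u), u_k − u⟩ → 0 as k → ∞, where ⟨A(u_k) − A(u), u_k − u⟩ = ⟨A(u_k), u_k − u⟩ − ⟨A(u), u_k − u⟩. Then ‖u_k‖_{X^s} → ‖u‖_{X^s}. -/

import Mathlib

open MeasureTheory Real Filter
open scoped ENNReal NNReal

noncomputable section

/-- The `p`-th power of the Gagliardo seminorm, as an extended nonnegative real. -/
def gagliardoP (n : ℕ) (s p : ℝ) (u : EuclideanSpace ℝ (Fin n) → ℝ) : ℝ≥0∞ :=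
  ∫⁻ x, ∫⁻ y, ENNReal.ofReal (|u x - u y| ^ p / ‖x - y‖ ^ ((n : ℝ) + s * p))

/-- Membership in the fractional Sobolev space with potential `X^s`. -/
def MemXs (n : ℕ) (s p : ℝ) (V : EuclideanSpace ℝ (Fin n) → ℝ)
    (u : EuclideanSpace ℝ (Fin n) → ℝ) : Prop :=
  Measurable u ∧ MemLp u (ENNReal.ofReal p) ∧ gagliardoP n s p u < ⊤ ∧
    Integrable (fun x => V x * |u x| ^ p)

/-- The norm of `X^s`. -/
def normXs (n : ℕ) (s p : ℝ) (V : EuclideanSpace ℝ (Fin n) → ℝ)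
    (u : EuclideanSpace ℝ (Fin n) → ℝ) : ℝ :=
  ((gagliardoP n s p u).toReal + ∫ x, V x * |u x| ^ p) ^ (1 / p)

/-- The pairing `⟨A(u), v⟩` associated with the fractional `p`-Laplacian plus potential. -/
def Apair (n : ℕ) (s p : ℝ) (V : EuclideanSpace ℝ (Fin n) → ℝ)
    (u v : EuclideanSpace ℝ (Fin n) → ℝ) : ℝ :=
  (∫ x, ∫ y, |u x - u y| ^ (p - 2) * (u x - u y) * (v x - v y) / ‖x - y‖ ^ ((n : ℝ) + s * p)) +
    ∫ x, V x * |u x| ^ (p - 2) * u x * v x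

/-- The primitive `F(x,t) = ∫_0^t f(x,τ) dτ`. -/
def Fprim (n : ℕ) (f : EuclideanSpace ℝ (Fin n) → ℝ → ℝ)
    (x : EuclideanSpace ℝ (Fin n)) (t : ℝ) : ℝ :=
  ∫ τ in (0:ℝ)..t, f x τ

/-- The energy functional `I`. -/
def energy (n : ℕ) (s p : ℝ) (V : EuclideanSpace ℝ (Fin n) → ℝ)
    (f : EuclideanSpace ℝ (Fin n) → ℝ → ℝ) (u : EuclideanSpace ℝ (Fin n) → ℝ) : ℝ :=
  (1 / p) * normXs n s p V u ^ p - ∫ x, Fprim n f x (u x)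

/-- Condition (V) on the potential. -/
def CondV (n : ℕ) (V : EuclideanSpace ℝ (Fin n) → ℝ) : Prop :=
  Continuous V ∧ (∃ V₀ > (0:ℝ), ∀ x, V₀ ≤ V x) ∧
    ∀ M > (0:ℝ), volume {x : EuclideanSpace ℝ (Fin n) | V x ≤ M} < ⊤

/-- Condition (f1): continuity, growth strictly below `|t|^{q-1}`, and `p`-superlinearity,
both uniformly in `x`. -/
def CondF1 (n : ℕ) (p q : ℝ) (f : EuclideanSpace ℝ (Fin n) → ℝ → ℝ) : Prop :=
  Continuous (Function.uncurry f) ∧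
    (∀ ε > (0:ℝ), ∃ T > (0:ℝ), ∀ x t, T ≤ |t| → |f x t| ≤ ε * |t| ^ (q - 1)) ∧
    (∀ L : ℝ, ∃ T > (0:ℝ), ∀ x t, T ≤ |t| → L * |t| ^ p ≤ f x t * t)

/-- Condition (f2): `f(x,t) = o(|t|^{p-2} t)` as `t → 0`, uniformly in `x`. -/
def CondF2 (n : ℕ) (p : ℝ) (f : EuclideanSpace ℝ (Fin n) → ℝ → ℝ) : Prop :=
  ∀ ε > (0:ℝ), ∃ δ > (0:ℝ), ∀ x t, t ≠ 0 → |t| < δ → |f x t| ≤ ε * |t| ^ (p - 1)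

/-- The function `𝓕(x,t) = f(x,t) t − p F(x,t)`. -/
def calF (n : ℕ) (p : ℝ) (f : EuclideanSpace ℝ (Fin n) → ℝ → ℝ)
    (x : EuclideanSpace ℝ (Fin n)) (t : ℝ) : ℝ :=
  f x t * t - p * Fprim n f x t

/-- Condition (f3). -/
def CondF3 (n : ℕ) (p : ℝ) (f : EuclideanSpace ℝ (Fin n) → ℝ → ℝ) : Prop :=
  ∃ θ : ℝ, 1 ≤ θ ∧ ∀ x t, ∀ σ ∈ Set.Icc (0:ℝ) 1,
    calF n p f x (σ * t) ≤ θ * calF n p f x t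

end

/-! For `p ≥ 2` and all reals `a, b`,
`|a - b|^p ≤ 2^(p-1) (|a|^(p-2) a - |b|^(p-2) b) (a - b)`.
The Gagliardo term of `‖u‖_{X^s}^p` is the `L^p` norm of `(x, y) ↦ u x - u y` for the measure
`|x - y|^(-n-sp) dx dy`, and the potential term is the `L^p` norm of `u` for `V dx`. In these terms
`⟨A(u_k) - A(u), u_k - u⟩` is a sum of two nonnegative integrals, each of which dominates
`2^(1-p)` times the `p`-th power of the corresponding `L^p` distance. Hence `u_k → u` in both
`L^p` spaces, both parts of the norm converge, and so does `‖u_k‖_{X^s}`. -/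

open Topology

noncomputable section

def signedPow (p t : ℝ) : ℝ := |t| ^ (p - 2) * t

lemma abs_signedPow {p : ℝ} (hp : p ≠ 1) (t : ℝ) : |signedPow p t| = |t| ^ (p - 1) := by
  rw [signedPow, abs_mul, abs_of_nonneg (by positivity),
    ← Real.rpow_add_one' (abs_nonneg t) (by contrapose! hp; linarith)]
  ring_nf

lemma measurable_signedPow (p : ℝ) : Measurable (signedPow p) := by
  unfold signedPow; fun_prop

lemma abs_sub_rpow_le_two_rpow_mul {q : ℝ} (hq : 0 ≤ q) (a b : ℝ) :
    |a - b| ^ q ≤ 2 ^ q * (|a| ^ q + |b| ^ q) := by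
  have hmax : |a - b| ≤ 2 * max |a| |b| := by
    linarith [abs_sub a b, le_max_left |a| |b|, le_max_right |a| |b|]
  calc |a - b| ^ q ≤ (2 * max |a| |b|) ^ q := by gcongr
    _ = 2 ^ q * max |a| |b| ^ q := by rw [Real.mul_rpow zero_le_two (by positivity)]
    _ ≤ 2 ^ q * (|a| ^ q + |b| ^ q) := by
      gcongr
      rcases le_total |a| |b| with h | h
      · rw [max_eq_right h]; exact le_add_of_nonneg_left (by positivity)
      · rw [max_eq_left h]; exact le_add_of_nonneg_right (by positivity)

lemma add_rpow_mul_sq_le {q : ℝ} (hq : 0 ≤ q) (a b : ℝ) :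
    (|a| ^ q + |b| ^ q) * (a - b) ^ 2 ≤ 2 * ((|a| ^ q * a - |b| ^ q * b) * (a - b)) := by
  -- the difference of the two sides is `(|a|^q - |b|^q) * (a^2 - b^2)`
  have key : 0 ≤ (|a| ^ q - |b| ^ q) * (a ^ 2 - b ^ 2) := by
    rcases le_total |a| |b| with h | h
    · refine mul_nonneg_of_nonpos_of_nonpos ?_ ?_
      · linarith [Real.rpow_le_rpow (abs_nonneg a) h hq]
      · linarith [sq_le_sq.mpr h]
    · refine mul_nonneg ?_ ?_
      · linarith [Real.rpow_le_rpow (abs_nonneg b) h hq]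
      · linarith [sq_le_sq.mpr h]
  linear_combination key

theorem abs_sub_rpow_le_mul_signedPow {p : ℝ} (hp : 2 ≤ p) (a b : ℝ) :
    |a - b| ^ p ≤ 2 ^ (p - 1) * ((signedPow p a - signedPow p b) * (a - b)) := by
  have hq : 0 ≤ p - 2 := by linarith
  calc |a - b| ^ p = |a - b| ^ (p - 2) * (a - b) ^ 2 := by
        rw [← sq_abs (a - b), ← Real.rpow_two, ← Real.rpow_add' (abs_nonneg _) (by linarith)]
        ring_nf
    _ ≤ 2 ^ (p - 2) * ((|a| ^ (p - 2) + |b| ^ (p - 2)) * (a - b) ^ 2) := by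
        rw [← mul_assoc]; gcongr; exact abs_sub_rpow_le_two_rpow_mul hq a b
    _ ≤ 2 ^ (p - 2) * (2 * ((signedPow p a - signedPow p b) * (a - b))) :=
        mul_le_mul_of_nonneg_left (add_rpow_mul_sq_le hq a b) (by positivity)
    _ = 2 ^ (p - 1) * ((signedPow p a - signedPow p b) * (a - b)) := by
        rw [show p - 1 = p - 2 + 1 by ring, Real.rpow_add_one two_ne_zero]; ring

lemma signedPow_sub_mul_sub_nonneg {p : ℝ} (hp : 2 ≤ p) (a b : ℝ) :
    0 ≤ (signedPow p a - signedPow p b) * (a - b) := by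
  have := abs_sub_rpow_le_mul_signedPow hp a b
  have : 0 < (2 : ℝ) ^ (p - 1) := by positivity
  nlinarith [Real.rpow_nonneg (abs_nonneg (a - b)) p]

lemma abs_rpow_sub_one_mul_le {p : ℝ} (hp : 1 ≤ p) (a c : ℝ) :
    |a| ^ (p - 1) * |c| ≤ |a| ^ p + |c| ^ p := by
  have hsucc : ∀ t : ℝ, |t| ^ (p - 1) * |t| = |t| ^ p := fun t => by
    rw [← Real.rpow_add_one' (abs_nonneg t) (by linarith)]; ring_nf
  rcases le_total |c| |a| with h | h
  · calc |a| ^ (p - 1) * |c| ≤ |a| ^ (p - 1) * |a| := by gcongr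
      _ ≤ |a| ^ p + |c| ^ p := by rw [hsucc]; exact le_add_of_nonneg_right (by positivity)
  · calc |a| ^ (p - 1) * |c| ≤ |c| ^ (p - 1) * |c| := by gcongr
      _ ≤ |a| ^ p + |c| ^ p := by rw [hsucc]; exact le_add_of_nonneg_left (by positivity)

section MonotonicityGap

variable {α : Type*} [MeasurableSpace α] {μ : Measure α} {p : ℝ} {f g : α → ℝ}

def monotonicityGap (p : ℝ) (μ : Measure α) (f g : α → ℝ) : ℝ :=
  ∫ x, (signedPow p (f x) - signedPow p (g x)) * (f x - g x) ∂μ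

lemma MeasureTheory.MemLp.integrable_abs_rpow (hp : 0 < p)
    (hf : MemLp f (ENNReal.ofReal p) μ) : Integrable (fun x => |f x| ^ p) μ := by
  simpa [ENNReal.toReal_ofReal hp.le, Real.norm_eq_abs] using
    hf.integrable_norm_rpow (by simpa using hp) ENNReal.ofReal_ne_top

lemma integrable_signedPow_mul (hp : 1 < p) (hf : MemLp f (ENNReal.ofReal p) μ)
    (hg : MemLp g (ENNReal.ofReal p) μ) : Integrable (fun x => signedPow p (f x) * g x) μ := by
  refine Integrable.mono' ((hf.integrable_abs_rpow (by linarith)).add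
    (hg.integrable_abs_rpow (by linarith))) ?_ (Eventually.of_forall fun x => ?_)
  · exact ((measurable_signedPow p).comp_aemeasurable hf.1.aemeasurable).mul
      hg.1.aemeasurable |>.aestronglyMeasurable
  · rw [Real.norm_eq_abs, abs_mul, abs_signedPow hp.ne']
    exact abs_rpow_sub_one_mul_le hp.le _ _

lemma monotonicityGap_eq_sub (hp : 1 < p) (hf : MemLp f (ENNReal.ofReal p) μ)
    (hg : MemLp g (ENNReal.ofReal p) μ) :
    monotonicityGap p μ f g = ∫ x, signedPow p (f x) * (f - g) x ∂μ -
      ∫ x, signedPow p (g x) * (f - g) x ∂μ := by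
  rw [monotonicityGap, ← integral_sub (integrable_signedPow_mul hp hf (hf.sub hg))
    (integrable_signedPow_mul hp hg (hf.sub hg))]
  simp only [Pi.sub_apply, sub_mul]

lemma monotonicityGap_nonneg (hp : 2 ≤ p) (μ : Measure α) (f g : α → ℝ) :
    0 ≤ monotonicityGap p μ f g :=
  integral_nonneg fun _ => signedPow_sub_mul_sub_nonneg hp _ _

lemma lintegral_enorm_sub_rpow_le (hp : 2 ≤ p) (hf : MemLp f (ENNReal.ofReal p) μ)
    (hg : MemLp g (ENNReal.ofReal p) μ) :
    ∫⁻ x, ‖f x - g x‖ₑ ^ p ∂μ ≤ ENNReal.ofReal (2 ^ (p - 1) * monotonicityGap p μ f g) := by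
  have hint : Integrable (fun x => (signedPow p (f x) - signedPow p (g x)) * (f x - g x)) μ := by
    refine ((integrable_signedPow_mul (by linarith) hf (hf.sub hg)).sub
      (integrable_signedPow_mul (by linarith) hg (hf.sub hg))).congr (.of_forall fun x => ?_)
    simp only [Pi.sub_apply, sub_mul]
  rw [monotonicityGap, ← integral_const_mul, ofReal_integral_eq_lintegral_ofReal (hint.const_mul _)
    (.of_forall fun _ => mul_nonneg (by positivity) (signedPow_sub_mul_sub_nonneg hp _ _))]
  refine lintegral_mono fun x => ?_
  rw [Real.enorm_eq_ofReal_abs, ENNReal.ofReal_rpow_of_nonneg (abs_nonneg _) (by linarith)]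
  exact ENNReal.ofReal_le_ofReal (abs_sub_rpow_le_mul_signedPow hp _ _)

lemma norm_toLp_rpow (hp : 0 < p) (hf : MemLp f (ENNReal.ofReal p) μ) :
    ‖hf.toLp f‖ ^ p = (∫⁻ x, ‖f x‖ₑ ^ p ∂μ).toReal := by
  rw [Lp.norm_toLp, eLpNorm_eq_lintegral_rpow_enorm_toReal (by simpa using hp)
    ENNReal.ofReal_ne_top, ENNReal.toReal_ofReal hp.le, ← ENNReal.toReal_rpow,
    ← Real.rpow_mul ENNReal.toReal_nonneg, one_div_mul_cancel hp.ne', Real.rpow_one]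

theorem tendsto_lintegral_rpow_of_tendsto_monotonicityGap (hp : 2 ≤ p) {F : ℕ → α → ℝ}
    {G : α → ℝ} (hF : ∀ k, MemLp (F k) (ENNReal.ofReal p) μ) (hG : MemLp G (ENNReal.ofReal p) μ)
    (h : Tendsto (fun k => monotonicityGap p μ (F k) G) atTop (𝓝 0)) :
    Tendsto (fun k => (∫⁻ x, ‖F k x‖ₑ ^ p ∂μ).toReal) atTop
      (𝓝 (∫⁻ x, ‖G x‖ₑ ^ p ∂μ).toReal) := by
  have hp0 : 0 < p := by linarith
  have : Fact (1 ≤ ENNReal.ofReal p) := ⟨by simpa using (by linarith : 1 ≤ p)⟩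
  have hdist : Tendsto (fun k => ‖(hF k).toLp (F k) - hG.toLp G‖ ^ p) atTop (𝓝 0) := by
    refine squeeze_zero (fun k => by positivity) (fun k => ?_)
      (by simpa using h.const_mul (2 ^ (p - 1)))
    rw [← MemLp.toLp_sub, norm_toLp_rpow hp0]
    exact ENNReal.toReal_le_of_le_ofReal
      (mul_nonneg (by positivity) (monotonicityGap_nonneg hp _ _ _))
      (lintegral_enorm_sub_rpow_le hp (hF k) hG)
  have hconv : Tendsto (fun k => (hF k).toLp (F k)) atTop (𝓝 (hG.toLp G)) := by
    rw [tendsto_iff_norm_sub_tendsto_zero]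
    simpa [← Real.rpow_mul (norm_nonneg _), hp0.ne'] using
      hdist.rpow_const (p := 1 / p) (Or.inr (by positivity))
  simpa only [Function.comp_def, norm_toLp_rpow hp0] using
    ((continuous_norm.tendsto _).comp hconv).rpow_const (Or.inr hp0.le)

end MonotonicityGap

def pairDiff {α : Type*} (u : α → ℝ) (z : α × α) : ℝ := u z.1 - u z.2

lemma pairDiff_sub {α : Type*} (u w : α → ℝ) : pairDiff (u - w) = pairDiff u - pairDiff w := by
  ext z; simp only [pairDiff, Pi.sub_apply]; ring

@[fun_prop]
lemma Measurable.pairDiff {α : Type*} [MeasurableSpace α] {u : α → ℝ} (hu : Measurable u) :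
    Measurable (_root_.pairDiff u) :=
  (hu.comp measurable_fst).sub (hu.comp measurable_snd)

def potentialMeasure {α : Type*} [MeasureSpace α] (V : α → ℝ) : Measure α :=
  volume.withDensity fun x => ENNReal.ofReal (V x)

section PotentialMeasure

variable {α : Type*} [MeasureSpace α] {V : α → ℝ}

lemma integral_potentialMeasure (hV : Measurable V) (hV0 : ∀ x, 0 ≤ V x) (g : α → ℝ) :
    ∫ x, g x ∂potentialMeasure V = ∫ x, V x * g x := by
  rw [potentialMeasure, integral_withDensity_eq_integral_toReal_smul hV.ennreal_ofReal
    (.of_forall fun _ => ENNReal.ofReal_lt_top)]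
  simp only [ENNReal.toReal_ofReal (hV0 _), smul_eq_mul]

lemma lintegral_potentialMeasure {p : ℝ} (hp : 0 ≤ p) (hV : Measurable V) (hV0 : ∀ x, 0 ≤ V x)
    {u : α → ℝ} (hu : Measurable u) :
    ∫⁻ x, ‖u x‖ₑ ^ p ∂potentialMeasure V = ∫⁻ x, ENNReal.ofReal (V x * |u x| ^ p) := by
  rw [potentialMeasure, lintegral_withDensity_eq_lintegral_mul _ hV.ennreal_ofReal (by fun_prop)]
  refine lintegral_congr fun x => ?_
  rw [Pi.mul_apply, ENNReal.ofReal_mul (hV0 x), Real.enorm_eq_ofReal_abs,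
    ENNReal.ofReal_rpow_of_nonneg (abs_nonneg _) hp]

end PotentialMeasure

section GagliardoMeasure

variable {n : ℕ} {s p : ℝ}

def gagliardoMeasure (n : ℕ) (s p : ℝ) :
    Measure (EuclideanSpace ℝ (Fin n) × EuclideanSpace ℝ (Fin n)) :=
  (volume.prod volume).withDensity fun z => ENNReal.ofReal (‖z.1 - z.2‖ ^ ((n : ℝ) + s * p))⁻¹

lemma measurable_gagliardoDensity :
    Measurable fun z : EuclideanSpace ℝ (Fin n) × EuclideanSpace ℝ (Fin n) =>
      ENNReal.ofReal (‖z.1 - z.2‖ ^ ((n : ℝ) + s * p))⁻¹ := by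
  fun_prop

lemma gagliardoP_eq_lintegral (hp : 0 ≤ p) {u : EuclideanSpace ℝ (Fin n) → ℝ}
    (hu : Measurable u) :
    gagliardoP n s p u = ∫⁻ z, ‖pairDiff u z‖ₑ ^ p ∂gagliardoMeasure n s p := by
  rw [gagliardoMeasure, lintegral_withDensity_eq_lintegral_mul _ measurable_gagliardoDensity
    (by fun_prop), gagliardoP, lintegral_lintegral (by fun_prop)]
  refine lintegral_congr fun z => ?_
  rw [Pi.mul_apply, div_eq_inv_mul, ENNReal.ofReal_mul (by positivity), pairDiff,
    Real.enorm_eq_ofReal_abs, ENNReal.ofReal_rpow_of_nonneg (abs_nonneg _) hp]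

lemma integral_integral_div_eq_integral_gagliardoMeasure
    {g : EuclideanSpace ℝ (Fin n) × EuclideanSpace ℝ (Fin n) → ℝ}
    (hg : Integrable g (gagliardoMeasure n s p)) :
    ∫ x, ∫ y, g (x, y) / ‖x - y‖ ^ ((n : ℝ) + s * p) = ∫ z, g z ∂gagliardoMeasure n s p := by
  have hdens : ∀ z : EuclideanSpace ℝ (Fin n) × EuclideanSpace ℝ (Fin n),
      (ENNReal.ofReal (‖z.1 - z.2‖ ^ ((n : ℝ) + s * p))⁻¹).toReal • g z =
        g z / ‖z.1 - z.2‖ ^ ((n : ℝ) + s * p) := fun z => by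
    rw [ENNReal.toReal_ofReal (by positivity), smul_eq_mul, div_eq_inv_mul]
  have hfin : ∀ᵐ z : EuclideanSpace ℝ (Fin n) × EuclideanSpace ℝ (Fin n) ∂volume.prod volume,
      ENNReal.ofReal (‖z.1 - z.2‖ ^ ((n : ℝ) + s * p))⁻¹ < ⊤ :=
    .of_forall fun _ => ENNReal.ofReal_lt_top
  rw [gagliardoMeasure, integrable_withDensity_iff_integrable_smul' measurable_gagliardoDensity
    hfin] at hg
  have hint : Integrable (fun z => g z / ‖z.1 - z.2‖ ^ ((n : ℝ) + s * p)) (volume.prod volume) := by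
    simpa only [hdens] using hg
  rw [gagliardoMeasure, integral_withDensity_eq_integral_toReal_smul measurable_gagliardoDensity
    hfin, integral_integral hint]
  simp only [hdens]

end GagliardoMeasure

section FractionalSobolev

variable {n : ℕ} {s p : ℝ} {V u w : EuclideanSpace ℝ (Fin n) → ℝ}

lemma normXs_eq (hp : 0 ≤ p) (hV : Measurable V) (hV0 : ∀ x, 0 ≤ V x) (hu : Measurable u) :
    normXs n s p V u = ((∫⁻ z, ‖pairDiff u z‖ₑ ^ p ∂gagliardoMeasure n s p).toReal +
      (∫⁻ x, ‖u x‖ₑ ^ p ∂potentialMeasure V).toReal) ^ (1 / p) := by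
  rw [normXs, gagliardoP_eq_lintegral hp hu, lintegral_potentialMeasure hp hV hV0 hu,
    integral_eq_lintegral_of_nonneg_ae (.of_forall fun x => by have := hV0 x; positivity)
      (by fun_prop)]

lemma MemXs.memLp_pairDiff (hp : 0 < p) (hu : MemXs n s p V u) :
    MemLp (pairDiff u) (ENNReal.ofReal p) (gagliardoMeasure n s p) := by
  refine ⟨hu.1.pairDiff.aestronglyMeasurable, ?_⟩
  rw [eLpNorm_lt_top_iff_lintegral_rpow_enorm_lt_top (by simpa using hp) ENNReal.ofReal_ne_top,
    ENNReal.toReal_ofReal hp.le, ← gagliardoP_eq_lintegral hp.le hu.1]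
  exact hu.2.2.1

lemma MemXs.memLp_potentialMeasure (hp : 0 < p) (hV : Measurable V) (hV0 : ∀ x, 0 ≤ V x)
    (hu : MemXs n s p V u) : MemLp u (ENNReal.ofReal p) (potentialMeasure V) := by
  refine ⟨hu.1.aestronglyMeasurable, ?_⟩
  rw [eLpNorm_lt_top_iff_lintegral_rpow_enorm_lt_top (by simpa using hp) ENNReal.ofReal_ne_top,
    ENNReal.toReal_ofReal hp.le, lintegral_potentialMeasure hp.le hV hV0 hu.1]
  exact hu.2.2.2.lintegral_lt_top

lemma Apair_eq_integral_add_integral (hV : Measurable V) (hV0 : ∀ x, 0 ≤ V x)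
    {v : EuclideanSpace ℝ (Fin n) → ℝ}
    (h : Integrable (fun z => signedPow p (pairDiff u z) * pairDiff v z) (gagliardoMeasure n s p)) :
    Apair n s p V u v = ∫ z, signedPow p (pairDiff u z) * pairDiff v z ∂gagliardoMeasure n s p +
      ∫ x, signedPow p (u x) * v x ∂potentialMeasure V := by
  rw [← integral_integral_div_eq_integral_gagliardoMeasure h, integral_potentialMeasure hV hV0,
    Apair]
  simp only [signedPow, pairDiff, mul_assoc]

lemma Apair_sub_Apair_eq_monotonicityGap_add (hp : 1 < p) (hV : Measurable V) (hV0 : ∀ x, 0 ≤ V x)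
    (hu : MemXs n s p V u) (hw : MemXs n s p V w) :
    Apair n s p V u (u - w) - Apair n s p V w (u - w) =
      monotonicityGap p (gagliardoMeasure n s p) (pairDiff u) (pairDiff w) +
        monotonicityGap p (potentialMeasure V) u w := by
  have hp0 : 0 < p := by linarith
  have hGu := hu.memLp_pairDiff hp0
  have hGw := hw.memLp_pairDiff hp0
  have hGuw : MemLp (pairDiff (u - w)) (ENNReal.ofReal p) (gagliardoMeasure n s p) := by
    rw [pairDiff_sub]; exact hGu.sub hGw
  rw [monotonicityGap_eq_sub hp hGu hGw, monotonicityGap_eq_sub hp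
    (hu.memLp_potentialMeasure hp0 hV hV0) (hw.memLp_potentialMeasure hp0 hV hV0),
    ← pairDiff_sub, Apair_eq_integral_add_integral hV hV0 (integrable_signedPow_mul hp hGu hGuw),
    Apair_eq_integral_add_integral hV hV0 (integrable_signedPow_mul hp hGw hGuw)]
  ring

end FractionalSobolev

end

theorem norm_convergence_of_Apair_general
    (n : ℕ) (s p : ℝ) (V : EuclideanSpace ℝ (Fin n) → ℝ)
    (hp : 2 ≤ p)
    (hVc : Continuous V) (hV0 : ∀ x, 0 ≤ V x)
    (u : ℕ → EuclideanSpace ℝ (Fin n) → ℝ) (w : EuclideanSpace ℝ (Fin n) → ℝ)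
    (hu : ∀ k, MemXs n s p V (u k)) (hw : MemXs n s p V w)
    (h : Tendsto (fun k => Apair n s p V (u k) (u k - w) - Apair n s p V w (u k - w))
      atTop (nhds 0)) :
    Tendsto (fun k => normXs n s p V (u k)) atTop (nhds (normXs n s p V w)) := by
  have hp0 : 0 < p := by linarith
  have hVm := hVc.measurable
  have hgaps := h.congr fun k =>
    Apair_sub_Apair_eq_monotonicityGap_add (by linarith) hVm hV0 (hu k) hw
  have hgapG : Tendsto (fun k => monotonicityGap p (gagliardoMeasure n s p)
      (pairDiff (u k)) (pairDiff w)) atTop (𝓝 0) :=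
    squeeze_zero (fun _ => monotonicityGap_nonneg hp _ _ _)
      (fun _ => le_add_of_nonneg_right (monotonicityGap_nonneg hp _ _ _)) hgaps
  have hgapV : Tendsto (fun k => monotonicityGap p (potentialMeasure V) (u k) w) atTop (𝓝 0) :=
    squeeze_zero (fun _ => monotonicityGap_nonneg hp _ _ _)
      (fun _ => le_add_of_nonneg_left (monotonicityGap_nonneg hp _ _ _)) hgaps
  have hGconv := tendsto_lintegral_rpow_of_tendsto_monotonicityGap hp
    (fun k => (hu k).memLp_pairDiff hp0) (hw.memLp_pairDiff hp0) hgapG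
  have hVconv := tendsto_lintegral_rpow_of_tendsto_monotonicityGap hp
    (fun k => (hu k).memLp_potentialMeasure hp0 hVm hV0) (hw.memLp_potentialMeasure hp0 hVm hV0)
    hgapV
  rw [normXs_eq hp0.le hVm hV0 hw.1]
  exact ((hGconv.add hVconv).rpow_const (Or.inr (by positivity))).congr
    fun k => (normXs_eq hp0.le hVm hV0 (hu k).1).symm

/-- convergence of norms from vanishing of `⟨A(u_k) − A(u), u_k − u⟩`. -/
theorem norm_convergence_of_Apair
    (n : ℕ) (s p : ℝ) (V : EuclideanSpace ℝ (Fin n) → ℝ)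
    (hn : 1 ≤ n) (hp : 2 ≤ p) (hs0 : 0 < s) (hs1 : s < 1)
    (hVc : Continuous V) (hV0 : ∀ x, 0 ≤ V x)
    (u : ℕ → EuclideanSpace ℝ (Fin n) → ℝ) (w : EuclideanSpace ℝ (Fin n) → ℝ)
    (hu : ∀ k, MemXs n s p V (u k)) (hw : MemXs n s p V w)
    (h : Tendsto (fun k => Apair n s p V (u k) (u k - w) - Apair n s p V w (u k - w))
      atTop (nhds 0)) :
    Tendsto (fun k => normXs n s p V (u k)) atTop (nhds (normXs n s p V w)) :=
  norm_convergence_of_Apair_general n s p V hp hVc hV0 u w hu hw h
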